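/- arXiv:2009.13591 — 8 statements merged into one kernel-verified Lean document; each statement's English description precedes it below -/
import Mathlib

section
/- Let μ be a fixed single-hidden-layer logistic feedforward network on [0,1]^p with k hidden nodes and parameter vector (θ₁, …, θ_d), d = (p+2)k + 1, extended by θ_i = 0 for i > d. Let 0 < a < 1. Then there exists N (depending only on μ, p, a) such that for all n ≥ N, every ς > 0, every k̃ ≤ n^a, and every network μ̃ with k̃ hidden nodes and parameters (θ̃₁, …, θ̃_{d̃}), d̃ = (p+2)k̃ + 1 (extended by zeros), satisfying |θ_i − θ̃_i| ≤ ς for all i: sup_{x ∈ [0,1]^p} (μ̃(x) − μ(x))² ≤ (5 n^a)² ς². -/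
open Real

noncomputable section

/-- The unit cube `[0,1]^p`. -/
def unitCube (p : ℕ) : Set (Fin p → ℝ) := Set.univ.pi fun _ => Set.Icc 0 1

/-- A single-hidden-layer logistic feedforward network with `k` hidden nodes, output
weights `β₀, β₁, …` and input weights `γ_{jh}`, with the parameter sequence extended by
zeros beyond the existing nodes. -/
def nnFunSeq (p k : ℕ) (β : ℕ → ℝ) (γ : ℕ → Fin (p + 1) → ℝ) (x : Fin p → ℝ) : ℝ :=
  β 0 + ∑ j ∈ Finset.range k, β (j + 1) *
    (1 + Real.exp (-(γ j 0 + ∑ h : Fin p, γ j h.succ * x h)))⁻¹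

/-!
Perturbing the weights of a hidden node by at most `ς` moves its input by at most `(p + 1) ς`
on `[0,1]^p`, and the logistic function is `1/4`-Lipschitz with values in `[0,1]`; so the term
`β_j σ(·)` moves by at most `ς + |β_j| (p + 1) ς / 4`. Padding both networks with zero nodes to
`max k k̃` nodes gives `|μ̃ - μ| ≤ ς (1 + max k k̃ + (p + 1)/4 · ∑ |β_j|)`, and since `k̃ ≤ n^a`
while `k` and `∑ |β_j|` are fixed, this is at most `2 n^a ς` for large `n`.
-/

open Finset

lemma Real.sigmoid_mul_one_sub_sigmoid_le (x : ℝ) : sigmoid x * (1 - sigmoid x) ≤ 4⁻¹ := by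
  nlinarith [sq_nonneg (sigmoid x - 2⁻¹)]

lemma Real.lipschitzWith_sigmoid : LipschitzWith 4⁻¹ sigmoid := by
  refine lipschitzWith_of_nnnorm_deriv_le differentiable_sigmoid fun x => ?_
  rw [← NNReal.coe_le_coe, coe_nnnorm, deriv_sigmoid, Real.norm_eq_abs,
    abs_of_nonneg (mul_nonneg (sigmoid_nonneg x) (sub_nonneg.2 (sigmoid_le_one x)))]
  simpa using sigmoid_mul_one_sub_sigmoid_le x

lemma Real.abs_sigmoid_sub_le (u v : ℝ) : |sigmoid u - sigmoid v| ≤ |u - v| / 4 := by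
  have := lipschitzWith_sigmoid.dist_le_mul u v
  simp only [Real.dist_eq, NNReal.coe_inv, NNReal.coe_ofNat] at this
  linarith

lemma abs_mul_sigmoid_sub_le (b b' u u' : ℝ) :
    |b' * sigmoid u' - b * sigmoid u| ≤ |b' - b| + |b| * (|u' - u| / 4) := by
  have hσ : |sigmoid u'| ≤ 1 := abs_le.2 ⟨by linarith [sigmoid_nonneg u'], sigmoid_le_one u'⟩
  calc |b' * sigmoid u' - b * sigmoid u|
      = |(b' - b) * sigmoid u' + b * (sigmoid u' - sigmoid u)| := by ring_nf
    _ ≤ |b' - b| * |sigmoid u'| + |b| * |sigmoid u' - sigmoid u| := by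
        rw [← abs_mul, ← abs_mul]; exact abs_add_le _ _
    _ ≤ |b' - b| * 1 + |b| * (|u' - u| / 4) := by
        gcongr
        exact abs_sigmoid_sub_le u' u
    _ = _ := by ring

def nodeInput {p : ℕ} (g : Fin (p + 1) → ℝ) (x : Fin p → ℝ) : ℝ :=
  g 0 + ∑ h : Fin p, g h.succ * x h

lemma nodeInput_sub {p : ℕ} (g g' : Fin (p + 1) → ℝ) (x : Fin p → ℝ) :
    nodeInput g x - nodeInput g' x = nodeInput (g - g') x := by
  simp only [nodeInput, Pi.sub_apply, sub_mul, sum_sub_distrib]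
  ring

lemma abs_nodeInput_le {p : ℕ} {g : Fin (p + 1) → ℝ} {x : Fin p → ℝ} {c : ℝ}
    (hg : ∀ h, |g h| ≤ c) (hx : x ∈ unitCube p) : |nodeInput g x| ≤ (p + 1) * c := by
  have hterm : ∀ h : Fin p, |g h.succ * x h| ≤ c := fun h => by
    obtain ⟨hx0, hx1⟩ := hx h (Set.mem_univ h)
    rw [abs_mul, abs_of_nonneg hx0]
    nlinarith [hg h.succ, abs_nonneg (g h.succ)]
  calc |nodeInput g x| ≤ |g 0| + ∑ h : Fin p, |g h.succ * x h| :=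
        (abs_add_le _ _).trans (add_le_add le_rfl (abs_sum_le_sum_abs _ _))
    _ ≤ c + ∑ _h : Fin p, c := add_le_add (hg 0) (sum_le_sum fun h _ => hterm h)
    _ = (p + 1) * c := by simp; ring

lemma nnFunSeq_eq (p k : ℕ) (β : ℕ → ℝ) (γ : ℕ → Fin (p + 1) → ℝ) (x : Fin p → ℝ) :
    nnFunSeq p k β γ x = β 0 + ∑ j ∈ range k, β (j + 1) * sigmoid (nodeInput (γ j) x) := rfl

lemma nnFunSeq_eq_of_le {p k m : ℕ} {β : ℕ → ℝ} (γ : ℕ → Fin (p + 1) → ℝ) (x : Fin p → ℝ)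
    (hkm : k ≤ m) (hβ : ∀ j, k < j → β j = 0) : nnFunSeq p m β γ x = nnFunSeq p k β γ x := by
  rw [nnFunSeq_eq, nnFunSeq_eq,
    eventually_constant_sum (fun j hj => by rw [hβ (j + 1) (by omega), zero_mul]) hkm]

lemma abs_nnFunSeq_sub_le {p m : ℕ} {β βt : ℕ → ℝ} {γ γt : ℕ → Fin (p + 1) → ℝ} {ς : ℝ}
    {x : Fin p → ℝ} (hβ : ∀ j, |β j - βt j| ≤ ς) (hγ : ∀ j h, |γ j h - γt j h| ≤ ς)
    (hx : x ∈ unitCube p) :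
    |nnFunSeq p m βt γt x - nnFunSeq p m β γ x|
      ≤ ς * (1 + m + (p + 1) / 4 * ∑ j ∈ range m, |β (j + 1)|) := by
  have hβ' : ∀ j, |βt j - β j| ≤ ς := fun j => abs_sub_comm (β j) (βt j) ▸ hβ j
  have hinput : ∀ j, |nodeInput (γt j) x - nodeInput (γ j) x| ≤ (p + 1) * ς := fun j => by
    rw [nodeInput_sub]
    exact abs_nodeInput_le (fun h => abs_sub_comm (γ j h) (γt j h) ▸ hγ j h) hx
  have hterm : ∀ j, |βt (j + 1) * sigmoid (nodeInput (γt j) x)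
      - β (j + 1) * sigmoid (nodeInput (γ j) x)| ≤ ς + |β (j + 1)| * ((p + 1) * ς / 4) :=
    fun j => (abs_mul_sigmoid_sub_le _ _ _ _).trans <| by gcongr <;> [exact hβ' _; exact hinput j]
  rw [nnFunSeq_eq, nnFunSeq_eq, add_sub_add_comm, ← sum_sub_distrib]
  calc _ ≤ |βt 0 - β 0| + ∑ j ∈ range m, |βt (j + 1) * sigmoid (nodeInput (γt j) x)
          - β (j + 1) * sigmoid (nodeInput (γ j) x)| :=
        (abs_add_le _ _).trans (add_le_add le_rfl (abs_sum_le_sum_abs _ _))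
    _ ≤ ς + ∑ j ∈ range m, (ς + |β (j + 1)| * ((p + 1) * ς / 4)) :=
        add_le_add (hβ' 0) (sum_le_sum fun j _ => hterm j)
    _ = _ := by rw [sum_add_distrib, ← sum_mul]; simp; ring

lemma abs_nnFunSeq_sub_le_of_vanish {p k kt : ℕ} {β βt : ℕ → ℝ} {γ γt : ℕ → Fin (p + 1) → ℝ}
    {ς : ℝ} {x : Fin p → ℝ} (hβ0 : ∀ j, k < j → β j = 0) (hβt0 : ∀ j, kt < j → βt j = 0)
    (hβ : ∀ j, |β j - βt j| ≤ ς) (hγ : ∀ j h, |γ j h - γt j h| ≤ ς) (hx : x ∈ unitCube p) :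
    |nnFunSeq p kt βt γt x - nnFunSeq p k β γ x|
      ≤ ς * (1 + max k kt + (p + 1) / 4 * ∑ j ∈ range k, |β (j + 1)|) := by
  rw [← nnFunSeq_eq_of_le γt x (le_max_right k kt) hβt0,
    ← nnFunSeq_eq_of_le γ x (le_max_left k kt) hβ0,
    ← eventually_constant_sum (fun j hj => by rw [hβ0 (j + 1) (by omega), abs_zero])
      (le_max_left k kt)]
  exact_mod_cast abs_nnFunSeq_sub_le hβ hγ hx

theorem nn_perturbation_sup_bound_general (p k : ℕ) (a : ℝ) (ha : 0 < a)
    (β : ℕ → ℝ) (γ : ℕ → Fin (p + 1) → ℝ)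
    (hβ0 : ∀ j, k < j → β j = 0) :
    ∃ N : ℕ, ∀ n ≥ N, ∀ ς > (0 : ℝ), ∀ kt : ℕ, (kt : ℝ) ≤ (n : ℝ) ^ a →
      ∀ (βt : ℕ → ℝ) (γt : ℕ → Fin (p + 1) → ℝ),
        (∀ j, kt < j → βt j = 0) → (∀ j, kt ≤ j → γt j = 0) →
        (∀ j, |β j - βt j| ≤ ς) → (∀ j h, |γ j h - γt j h| ≤ ς) →
        ∀ x ∈ unitCube p,
          (nnFunSeq p kt βt γt x - nnFunSeq p k β γ x) ^ 2
            ≤ (5 * (n : ℝ) ^ a) ^ 2 * ς ^ 2 := by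
  set B := ∑ j ∈ range k, |β (j + 1)|
  obtain ⟨N, hN⟩ := Filter.eventually_atTop.1 <|
    ((tendsto_rpow_atTop ha).comp tendsto_natCast_atTop_atTop).eventually_ge_atTop
      (max (k : ℝ) (1 + (p + 1) / 4 * B))
  refine ⟨N, fun n hn ς hς kt hkt βt γt hβt0 _ hβ hγ x hx => ?_⟩
  obtain ⟨hk, hB⟩ : (k : ℝ) ≤ (n : ℝ) ^ a ∧ 1 + (p + 1) / 4 * B ≤ (n : ℝ) ^ a :=
    max_le_iff.1 (hN n hn)
  have hna : 0 ≤ (n : ℝ) ^ a := by positivity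
  have hdiff : |nnFunSeq p kt βt γt x - nnFunSeq p k β γ x| ≤ 5 * (n : ℝ) ^ a * ς :=
    calc _ ≤ ς * (1 + max k kt + (p + 1) / 4 * B) :=
          abs_nnFunSeq_sub_le_of_vanish hβ0 hβt0 hβ hγ hx
      _ ≤ ς * (2 * (n : ℝ) ^ a) := by
          gcongr
          linarith [max_le hk hkt, Nat.cast_max (α := ℝ) k kt]
      _ ≤ 5 * (n : ℝ) ^ a * ς := by nlinarith
  calc _ = |nnFunSeq p kt βt γt x - nnFunSeq p k β γ x| ^ 2 := (sq_abs _).symm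
    _ ≤ (5 * (n : ℝ) ^ a * ς) ^ 2 := by gcongr
    _ = _ := by ring

/-- Perturbation bound for neural networks (Lee's Lemma 6): for a fixed network `μ` with
`k` nodes (parameters extended by zero) there is `N` such that for all `n ≥ N`, any
`ς > 0`, and any network `μ̃` with `k̃ ≤ n^a` nodes whose (zero-extended) parameters are
within `ς` of those of `μ` coordinatewise, `sup_{x ∈ [0,1]^p} (μ̃(x) − μ(x))² ≤ (5n^a)²ς²`. -/
theorem nn_perturbation_sup_bound (p k : ℕ) (a : ℝ) (ha : 0 < a) (ha1 : a < 1)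
    (β : ℕ → ℝ) (γ : ℕ → Fin (p + 1) → ℝ)
    (hβ0 : ∀ j, k < j → β j = 0) (hγ0 : ∀ j, k ≤ j → γ j = 0) :
    ∃ N : ℕ, ∀ n ≥ N, ∀ ς > (0 : ℝ), ∀ kt : ℕ, (kt : ℝ) ≤ (n : ℝ) ^ a →
      ∀ (βt : ℕ → ℝ) (γt : ℕ → Fin (p + 1) → ℝ),
        (∀ j, kt < j → βt j = 0) → (∀ j, kt ≤ j → γt j = 0) →
        (∀ j, |β j - βt j| ≤ ς) → (∀ j h, |γ j h - γt j h| ≤ ς) →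
        ∀ x ∈ unitCube p,
          (nnFunSeq p kt βt γt x - nnFunSeq p k β γ x) ^ 2
            ≤ (5 * (n : ℝ) ^ a) ^ 2 * ς ^ 2 :=
  nn_perturbation_sup_bound_general p k a ha β γ hβ0
end
end

section
/- Let τ ∈ (0,1). For all y, μ₁, μ₂ ∈ ℝ, √(τ(1−τ)) · | exp(−½ ρ_τ(y − μ₁)) − exp(−½ ρ_τ(y − μ₂)) | ≤ ½ |μ₁ − μ₂|; that is, the square root of the asymmetric Laplace density with scale 1 and skewness τ is (1/2)-Lipschitz in its location parameter, uniformly in y. -/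
open MeasureTheory ProbabilityTheory Real Filter
open scoped ENNReal Topology NNReal

noncomputable section

/-- Check (quantile-loss) function `ρ_τ(u) = u (τ − 1_{u<0})`. -/
def checkFun (τ u : ℝ) : ℝ := u * (τ - if u < 0 then 1 else 0)

/-- Asymmetric Laplace density with location `μ`, scale `1`, skewness `τ`. -/
def ald (τ y μ : ℝ) : ℝ := τ * (1 - τ) * Real.exp (-(checkFun τ (y - μ)))

lemma checkFun_nonneg {τ : ℝ} (hτ : τ ∈ Set.Ioo (0 : ℝ) 1) (u : ℝ) :
    0 ≤ checkFun τ u := by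
  obtain ⟨h1, h2⟩ := hτ
  unfold checkFun
  split_ifs with h <;> nlinarith

lemma checkFun_lip {τ : ℝ} (hτ : τ ∈ Set.Ioo (0 : ℝ) 1) (u v : ℝ) :
    |checkFun τ u - checkFun τ v| ≤ |u - v| := by
  obtain ⟨h1, h2⟩ := hτ
  unfold checkFun
  rw [abs_le]
  constructor <;> split_ifs <;>
    nlinarith [le_abs_self (u - v), neg_abs_le (u - v)]

lemma exp_neg_lip {a b : ℝ} (ha : 0 ≤ a) (hb : 0 ≤ b) :
    |Real.exp (-a) - Real.exp (-b)| ≤ |a - b| := by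
  wlog h : a ≤ b generalizing a b
  · rw [abs_sub_comm, abs_sub_comm a b]; exact this hb ha (le_of_not_ge h)
  have h1 : Real.exp (-b) ≤ Real.exp (-a) := Real.exp_le_exp.2 (by linarith)
  have h2 : Real.exp (-a) ≤ 1 := Real.exp_le_one_iff.2 (by linarith)
  have h3 : (a - b) + 1 ≤ Real.exp (a - b) := Real.add_one_le_exp _
  have h4 : Real.exp (-b) = Real.exp (-a) * Real.exp (a - b) := by
    rw [← Real.exp_add]; ring_nf
  rw [abs_of_nonneg (by linarith), abs_of_nonpos (by linarith)]
  have h5 : Real.exp (-a) * ((a - b) + 1) ≤ Real.exp (-b) := by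
    rw [h4]
    exact mul_le_mul_of_nonneg_left h3 (Real.exp_pos _).le
  nlinarith [Real.exp_pos (-a)]

/-- The square root of the asymmetric Laplace density with scale `1` and skewness `τ`
is `(1/2)`-Lipschitz in its location parameter, uniformly in `y`. -/
theorem sqrt_ald_lipschitz_in_location (τ : ℝ) (hτ : τ ∈ Set.Ioo (0 : ℝ) 1) (y μ₁ μ₂ : ℝ) :
    Real.sqrt (τ * (1 - τ)) *
      |Real.exp (-(1 / 2) * checkFun τ (y - μ₁)) - Real.exp (-(1 / 2) * checkFun τ (y - μ₂))|
      ≤ |μ₁ - μ₂| / 2 := by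
  obtain ⟨h1, h2⟩ := hτ
  have hs : Real.sqrt (τ * (1 - τ)) ≤ 1 :=
    Real.sqrt_le_one.2 (by nlinarith)
  have hρ₁ := checkFun_nonneg ⟨h1, h2⟩ (y - μ₁)
  have hρ₂ := checkFun_nonneg ⟨h1, h2⟩ (y - μ₂)
  have key : |Real.exp (-(1 / 2) * checkFun τ (y - μ₁)) -
      Real.exp (-(1 / 2) * checkFun τ (y - μ₂))| ≤ |μ₁ - μ₂| / 2 := by
    have he : |Real.exp (-((1 / 2) * checkFun τ (y - μ₁))) -
        Real.exp (-((1 / 2) * checkFun τ (y - μ₂)))| ≤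
        |(1 / 2) * checkFun τ (y - μ₁) - (1 / 2) * checkFun τ (y - μ₂)| :=
      exp_neg_lip (by linarith) (by linarith)
    have hc : |checkFun τ (y - μ₁) - checkFun τ (y - μ₂)| ≤ |μ₁ - μ₂| := by
      have := checkFun_lip ⟨h1, h2⟩ (y - μ₁) (y - μ₂)
      calc |checkFun τ (y - μ₁) - checkFun τ (y - μ₂)| ≤ |(y - μ₁) - (y - μ₂)| := this
        _ = |μ₁ - μ₂| := by rw [abs_sub_comm]; ring_nf
    calc |Real.exp (-(1 / 2) * checkFun τ (y - μ₁)) -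
        Real.exp (-(1 / 2) * checkFun τ (y - μ₂))|
        = |Real.exp (-((1 / 2) * checkFun τ (y - μ₁))) -
          Real.exp (-((1 / 2) * checkFun τ (y - μ₂)))| := by ring_nf
      _ ≤ |(1 / 2) * checkFun τ (y - μ₁) - (1 / 2) * checkFun τ (y - μ₂)| := he
      _ = |checkFun τ (y - μ₁) - checkFun τ (y - μ₂)| / 2 := by
          rw [← mul_sub, abs_mul]
          simp [abs_of_nonneg]; ring
      _ ≤ |μ₁ - μ₂| / 2 := by linarith
  calc Real.sqrt (τ * (1 - τ)) *
      |Real.exp (-(1 / 2) * checkFun τ (y - μ₁)) - Real.exp (-(1 / 2) * checkFun τ (y - μ₂))|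
      ≤ 1 * (|μ₁ - μ₂| / 2) :=
        mul_le_mul hs key (abs_nonneg _) one_pos.le
    _ = |μ₁ - μ₂| / 2 := one_mul _

end
end

section
/- Let τ ∈ (0,1) with τ ≠ 1/2, and let μ₁, μ₂ ∈ ℝ with Δ = |μ₁ − μ₂|. Then ∫_ℝ τ(1−τ) exp( −½ ρ_τ(y − μ₁) − ½ ρ_τ(y − μ₂) ) dy = (1−τ)/(1−2τ) · exp(−Δτ/2) − τ/(1−2τ) · exp(−Δ(1−τ)/2). Equivalently, the Hellinger affinity ∫ √(ald(y;μ₁) · ald(y;μ₂)) dy between two asymmetric Laplace densities with scale 1 and common skewness τ equals this expression, so the squared Hellinger distance between them equals 2 − 2[(1−τ)e^{−Δτ/2} − τ e^{−Δ(1−τ)/2}]/(1−2τ). -/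
open MeasureTheory ProbabilityTheory Real Filter
open scoped ENNReal Topology NNReal

noncomputable section

/-!
Since `ρ_τ(y - μ₁) + ρ_τ(y - μ₂)` is symmetric in `μ₁, μ₂` and the integral over `ℝ` is translation
invariant, it suffices to integrate `exp (-(ρ_τ y + ρ_τ (y - Δ)) / 2)` for `Δ = |μ₁ - μ₂| ≥ 0`.
Its exponent is linear on each of `(-∞, 0]`, `[0, Δ]`, `[Δ, ∞)`, with slopes `1 - τ`, `(1 - 2τ)/2`
and `-τ`, so the integral is a sum of three elementary exponential integrals. The case `Δ = 0`
shows that `ald` is a probability density, and then `∫ (√f - √g)² = 2 - 2 ∫ √(f g)`.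
-/

open Set

theorem integral_sqrt_sub_sqrt_sq {α : Type*} [MeasurableSpace α] {μ : Measure α} {f g : α → ℝ}
    (hf : 0 ≤ f) (hg : 0 ≤ g) (hfi : Integrable f μ) (hgi : Integrable g μ)
    (hfgi : Integrable (fun x ↦ √(f x * g x)) μ) :
    ∫ x, (√(f x) - √(g x)) ^ 2 ∂μ = ∫ x, f x ∂μ + ∫ x, g x ∂μ - 2 * ∫ x, √(f x * g x) ∂μ := by
  have hpt : ∀ x, (√(f x) - √(g x)) ^ 2 = f x + g x - 2 * √(f x * g x) := fun x ↦ by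
    rw [sub_sq, sq_sqrt (hf x), sq_sqrt (hg x), sqrt_mul (hf x)]
    ring
  simp_rw [hpt]
  rw [integral_sub (by exact hfi.add hgi) (hfgi.const_mul 2), integral_add hfi hgi,
    integral_const_mul]

lemma checkFun_eq_mul_sub_min (τ u : ℝ) : checkFun τ u = τ * u - min u 0 := by
  rcases lt_or_ge u 0 with h | h
  · rw [checkFun, if_pos h, min_eq_left h.le]; ring
  · rw [checkFun, if_neg (not_lt.2 h), min_eq_right h]; ring

lemma continuous_checkFun (τ : ℝ) : Continuous (checkFun τ) := by
  simp_rw [funext (checkFun_eq_mul_sub_min τ)]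
  fun_prop

lemma checkFun_of_nonneg (τ : ℝ) {u : ℝ} (h : 0 ≤ u) : checkFun τ u = τ * u := by
  rw [checkFun_eq_mul_sub_min, min_eq_right h, sub_zero]

lemma checkFun_of_nonpos (τ : ℝ) {u : ℝ} (h : u ≤ 0) : checkFun τ u = (τ - 1) * u := by
  rw [checkFun_eq_mul_sub_min, min_eq_left h]; ring

/-- The Hellinger affinity integrand `√(ald τ y μ₁ · ald τ y μ₂)` without its factor `τ (1 - τ)`. -/
def affinityKernel (τ μ₁ μ₂ y : ℝ) : ℝ :=
  exp (-(1 / 2) * checkFun τ (y - μ₁) - (1 / 2) * checkFun τ (y - μ₂))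

def aldAffinity (τ Δ : ℝ) : ℝ :=
  (1 - τ) / (1 - 2 * τ) * exp (-(Δ * τ / 2)) - τ / (1 - 2 * τ) * exp (-(Δ * (1 - τ) / 2))

lemma continuous_affinityKernel (τ μ₁ μ₂ : ℝ) : Continuous (affinityKernel τ μ₁ μ₂) := by
  have := continuous_checkFun τ
  unfold affinityKernel
  fun_prop

lemma affinityKernel_comm (τ μ₁ μ₂ : ℝ) : affinityKernel τ μ₁ μ₂ = affinityKernel τ μ₂ μ₁ := by
  ext y
  simp only [affinityKernel]
  ring_nf

lemma exists_affinityKernel_eq_comp_sub (τ μ₁ μ₂ : ℝ) :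
    ∃ c, affinityKernel τ μ₁ μ₂ = fun y ↦ affinityKernel τ 0 |μ₁ - μ₂| (y - c) := by
  wlog h : μ₁ ≤ μ₂ generalizing μ₁ μ₂
  · rw [affinityKernel_comm, abs_sub_comm]
    exact this μ₂ μ₁ (le_of_not_ge h)
  refine ⟨μ₁, funext fun y ↦ ?_⟩
  rw [abs_sub_comm, abs_of_nonneg (sub_nonneg.2 h)]
  simp only [affinityKernel, sub_zero, sub_sub_sub_cancel_right]

lemma integral_affinityKernel_eq (τ μ₁ μ₂ : ℝ) :
    ∫ y, affinityKernel τ μ₁ μ₂ y = ∫ y, affinityKernel τ 0 |μ₁ - μ₂| y := by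
  obtain ⟨c, hc⟩ := exists_affinityKernel_eq_comp_sub τ μ₁ μ₂
  rw [hc, integral_sub_right_eq_self (affinityKernel τ 0 |μ₁ - μ₂|) c]

section AffinityKernel

variable {τ Δ : ℝ}

lemma affinityKernel_of_nonpos (hΔ : 0 ≤ Δ) {y : ℝ} (hy : y ≤ 0) :
    affinityKernel τ 0 Δ y = exp (-(Δ * (1 - τ) / 2)) * exp ((1 - τ) * y) := by
  rw [affinityKernel, sub_zero, checkFun_of_nonpos τ hy, checkFun_of_nonpos τ (by linarith),
    ← exp_add]
  ring_nf

lemma affinityKernel_of_mem_Icc {y : ℝ} (hy : y ∈ Icc 0 Δ) :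
    affinityKernel τ 0 Δ y = exp (-(Δ * (1 - τ) / 2)) * exp ((1 - 2 * τ) / 2 * y) := by
  rw [affinityKernel, sub_zero, checkFun_of_nonneg τ hy.1,
    checkFun_of_nonpos τ (sub_nonpos.2 hy.2), ← exp_add]
  ring_nf

lemma affinityKernel_of_le (hΔ : 0 ≤ Δ) {y : ℝ} (hy : Δ ≤ y) :
    affinityKernel τ 0 Δ y = exp (Δ * τ / 2) * exp (-τ * y) := by
  rw [affinityKernel, sub_zero, checkFun_of_nonneg τ (hΔ.trans hy),
    checkFun_of_nonneg τ (sub_nonneg.2 hy), ← exp_add]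
  ring_nf

lemma integrableOn_affinityKernel_Iic (hτ : τ < 1) (hΔ : 0 ≤ Δ) :
    IntegrableOn (affinityKernel τ 0 Δ) (Iic 0) :=
  IntegrableOn.congr_fun ((integrableOn_exp_mul_Iic (sub_pos.2 hτ) 0).const_mul _)
    (fun _ hy ↦ (affinityKernel_of_nonpos hΔ hy).symm) measurableSet_Iic

lemma setIntegral_affinityKernel_Iic (hτ : τ < 1) (hΔ : 0 ≤ Δ) :
    ∫ y in Iic 0, affinityKernel τ 0 Δ y = exp (-(Δ * (1 - τ) / 2)) / (1 - τ) := by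
  rw [setIntegral_congr_fun measurableSet_Iic fun _ hy ↦ affinityKernel_of_nonpos hΔ hy,
    integral_const_mul, integral_exp_mul_Iic (sub_pos.2 hτ), mul_zero, exp_zero, mul_one_div]

lemma integrableOn_affinityKernel_Ioi (hτ : 0 < τ) (hΔ : 0 ≤ Δ) :
    IntegrableOn (affinityKernel τ 0 Δ) (Ioi Δ) :=
  IntegrableOn.congr_fun ((integrableOn_exp_mul_Ioi (neg_neg_of_pos hτ) Δ).const_mul _)
    (fun _ hy ↦ (affinityKernel_of_le hΔ (le_of_lt hy)).symm) measurableSet_Ioi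

lemma setIntegral_affinityKernel_Ioi (hτ : 0 < τ) (hΔ : 0 ≤ Δ) :
    ∫ y in Ioi Δ, affinityKernel τ 0 Δ y = exp (-(Δ * τ / 2)) / τ := by
  rw [setIntegral_congr_fun measurableSet_Ioi fun _ hy ↦ affinityKernel_of_le hΔ (le_of_lt hy),
    integral_const_mul, integral_exp_mul_Ioi (neg_neg_of_pos hτ), neg_div_neg_eq, ← mul_div_assoc,
    ← exp_add]
  ring_nf

lemma intervalIntegral_affinityKernel (hτ : τ ≠ 1 / 2) (hΔ : 0 ≤ Δ) :
    ∫ y in (0)..Δ, affinityKernel τ 0 Δ y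
      = 2 * (exp (-(Δ * τ / 2)) - exp (-(Δ * (1 - τ) / 2))) / (1 - 2 * τ) := by
  have hslope : (1 - 2 * τ) / 2 ≠ 0 := by contrapose! hτ; linarith
  have hexp : exp (-(Δ * (1 - τ) / 2)) * exp ((1 - 2 * τ) / 2 * Δ) = exp (-(Δ * τ / 2)) := by
    rw [← exp_add]; ring_nf
  rw [intervalIntegral.integral_congr fun _ hy ↦ affinityKernel_of_mem_Icc (uIcc_of_le hΔ ▸ hy),
    intervalIntegral.integral_const_mul,
    intervalIntegral.integral_comp_mul_left (fun y ↦ exp y) hslope, integral_exp, smul_eq_mul,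
    mul_zero, exp_zero, mul_left_comm, mul_sub, hexp, mul_one]
  field_simp

lemma integrable_affinityKernel_zero_left (hτ : τ ∈ Ioo 0 1) (hΔ : 0 ≤ Δ) :
    Integrable (affinityKernel τ 0 Δ) := by
  have hIic : IntegrableOn (affinityKernel τ 0 Δ) (Iic Δ) := by
    rw [← Iic_union_Ioc_eq_Iic hΔ]
    exact (integrableOn_affinityKernel_Iic hτ.2 hΔ).union
      (continuous_affinityKernel τ 0 Δ).integrableOn_Ioc
  rw [← integrableOn_univ, ← Iic_union_Ioi (a := Δ)]
  exact hIic.union (integrableOn_affinityKernel_Ioi hτ.1 hΔ)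

lemma integral_affinityKernel_zero_left (hτ : τ ∈ Ioo 0 1) (hΔ : 0 ≤ Δ) :
    ∫ y, affinityKernel τ 0 Δ y = exp (-(Δ * (1 - τ) / 2)) / (1 - τ)
      + (∫ y in (0)..Δ, affinityKernel τ 0 Δ y) + exp (-(Δ * τ / 2)) / τ := by
  have hint := integrable_affinityKernel_zero_left hτ hΔ
  rw [← intervalIntegral.integral_Iic_add_Ioi (b := Δ) hint.integrableOn hint.integrableOn,
    ← intervalIntegral.integral_Iic_sub_Iic (a := 0) hint.integrableOn hint.integrableOn,
    setIntegral_affinityKernel_Iic hτ.2 hΔ, setIntegral_affinityKernel_Ioi hτ.1 hΔ]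
  ring

lemma integrable_affinityKernel (hτ : τ ∈ Ioo 0 1) (μ₁ μ₂ : ℝ) :
    Integrable (affinityKernel τ μ₁ μ₂) := by
  obtain ⟨c, hc⟩ := exists_affinityKernel_eq_comp_sub τ μ₁ μ₂
  rw [hc]
  exact (integrable_affinityKernel_zero_left hτ (abs_nonneg _)).comp_sub_right c

lemma integral_affinityKernel (hτ : τ ∈ Ioo 0 1) (hτ2 : τ ≠ 1 / 2) (μ₁ μ₂ : ℝ) :
    ∫ y, τ * (1 - τ) * affinityKernel τ μ₁ μ₂ y = aldAffinity τ |μ₁ - μ₂| := by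
  have h0τ : τ ≠ 0 := hτ.1.ne'
  have h1τ : 1 - τ ≠ 0 := (sub_pos.2 hτ.2).ne'
  have h2τ : 1 - τ * 2 ≠ 0 := by contrapose! hτ2; linarith
  rw [integral_const_mul, integral_affinityKernel_eq,
    integral_affinityKernel_zero_left hτ (abs_nonneg (μ₁ - μ₂)),
    intervalIntegral_affinityKernel hτ2 (abs_nonneg (μ₁ - μ₂)), aldAffinity]
  field_simp
  ring

end AffinityKernel

section ALD

variable {τ : ℝ}

lemma ald_nonneg (hτ : τ ∈ Icc 0 1) (y μ : ℝ) : 0 ≤ ald τ y μ :=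
  mul_nonneg (mul_nonneg hτ.1 (sub_nonneg.2 hτ.2)) (exp_pos _).le

lemma ald_eq_affinityKernel (τ y μ : ℝ) : ald τ y μ = τ * (1 - τ) * affinityKernel τ μ μ y := by
  rw [ald, affinityKernel]
  ring_nf

lemma sqrt_ald_mul_ald (hτ : τ ∈ Icc 0 1) (y μ₁ μ₂ : ℝ) :
    √(ald τ y μ₁ * ald τ y μ₂) = τ * (1 - τ) * affinityKernel τ μ₁ μ₂ y := by
  have hprod : ald τ y μ₁ * ald τ y μ₂
      = (τ * (1 - τ) * affinityKernel τ μ₁ μ₂ y) * (τ * (1 - τ) * affinityKernel τ μ₁ μ₂ y) := by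
    rw [ald, ald, affinityKernel, mul_mul_mul_comm, mul_mul_mul_comm _ (exp _), ← exp_add,
      ← exp_add]
    ring_nf
  rw [hprod, sqrt_mul_self]
  exact mul_nonneg (mul_nonneg hτ.1 (sub_nonneg.2 hτ.2)) (exp_pos _).le

lemma integrable_ald (hτ : τ ∈ Ioo 0 1) (μ : ℝ) : Integrable (fun y ↦ ald τ y μ) := by
  simp_rw [ald_eq_affinityKernel]
  exact (integrable_affinityKernel hτ μ μ).const_mul _

lemma integral_ald (hτ : τ ∈ Ioo 0 1) (μ : ℝ) : ∫ y, ald τ y μ = 1 := by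
  have h0τ : τ ≠ 0 := hτ.1.ne'
  have h1τ : 1 - τ ≠ 0 := (sub_pos.2 hτ.2).ne'
  simp_rw [ald_eq_affinityKernel]
  rw [integral_const_mul, integral_affinityKernel_eq, sub_self, abs_zero,
    integral_affinityKernel_zero_left hτ le_rfl, intervalIntegral.integral_same]
  simp only [zero_mul, zero_div, neg_zero, exp_zero]
  field_simp
  ring

end ALD

/-- The Hellinger affinity between two asymmetric Laplace densities with scale `1` and
common skewness `τ ≠ 1/2` located at `μ₁` and `μ₂` (with `Δ = |μ₁ − μ₂|`) equals
`(1−τ)/(1−2τ) · e^{−Δτ/2} − τ/(1−2τ) · e^{−Δ(1−τ)/2}`; equivalently the squared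
Hellinger distance equals `2 − 2` times this expression. -/
theorem hellinger_affinity_ald (τ : ℝ) (hτ : τ ∈ Set.Ioo (0 : ℝ) 1) (hτ2 : τ ≠ 1 / 2)
    (μ₁ μ₂ : ℝ) :
    (∫ y : ℝ, τ * (1 - τ) *
        Real.exp (-(1 / 2) * checkFun τ (y - μ₁) - (1 / 2) * checkFun τ (y - μ₂)))
      = (1 - τ) / (1 - 2 * τ) * Real.exp (-(|μ₁ - μ₂| * τ / 2))
        - τ / (1 - 2 * τ) * Real.exp (-(|μ₁ - μ₂| * (1 - τ) / 2)) ∧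
    (∫ y : ℝ, (Real.sqrt (ald τ y μ₁) - Real.sqrt (ald τ y μ₂)) ^ 2)
      = 2 - 2 * ((1 - τ) / (1 - 2 * τ) * Real.exp (-(|μ₁ - μ₂| * τ / 2))
        - τ / (1 - 2 * τ) * Real.exp (-(|μ₁ - μ₂| * (1 - τ) / 2))) := by
  have hτIcc : τ ∈ Icc 0 1 := Ioo_subset_Icc_self hτ
  have haffinity := integral_affinityKernel hτ hτ2 μ₁ μ₂
  refine ⟨haffinity, ?_⟩
  have hsqrt_int : Integrable (fun y ↦ √(ald τ y μ₁ * ald τ y μ₂)) := by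
    simpa only [sqrt_ald_mul_ald hτIcc] using (integrable_affinityKernel hτ μ₁ μ₂).const_mul _
  rw [integral_sqrt_sub_sqrt_sq (ald_nonneg hτIcc · μ₁) (ald_nonneg hτIcc · μ₂)
      (integrable_ald hτ μ₁) (integrable_ald hτ μ₂) hsqrt_int,
    integral_ald hτ, integral_ald hτ]
  simp_rw [sqrt_ald_mul_ald hτIcc]
  rw [haffinity, aldAffinity]
  ring

end
end

section
/- Let τ ∈ (0,1) with τ ≠ 1/2, and define g : [0,∞) → ℝ by g(ε) = [(1−τ) exp(−ετ/2) − τ exp(−ε(1−τ)/2)] / (1−2τ). Then g(0) = 1, g is strictly decreasing on [0,∞), and consequently g(ε) < 1 for every ε > 0. -/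
open MeasureTheory ProbabilityTheory Real Filter
open scoped ENNReal Topology NNReal

noncomputable section

/-!
With `a = τ/2` and `b = (1 - τ)/2`, the affinity is `(b e^{-εa} - a e^{-εb}) / (b - a)`. Its
derivative `a b (e^{-εb} - e^{-εa}) / (b - a)` is `a b` times a difference quotient of the strictly
decreasing map `t ↦ e^{-εt}`, hence negative for `ε > 0`; and the affinity equals `1` at `ε = 0`.
-/

def expAffinity (a b ε : ℝ) : ℝ := (b * exp (-(ε * a)) - a * exp (-(ε * b))) / (b - a)

lemma expAffinity_zero {a b : ℝ} (hab : a ≠ b) : expAffinity a b 0 = 1 := by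
  simp only [expAffinity, zero_mul, neg_zero, exp_zero, mul_one]
  exact div_self (sub_ne_zero.2 hab.symm)

lemma hasDerivAt_expAffinity (a b x : ℝ) :
    HasDerivAt (expAffinity a b) (a * b * (exp (-(x * b)) - exp (-(x * a))) / (b - a)) x := by
  have hexp (c : ℝ) : HasDerivAt (fun ε => exp (-(ε * c))) (exp (-(x * c)) * -c) x := by
    simpa using ((hasDerivAt_id x).mul_const c).neg.exp
  exact ((((hexp a).const_mul b).sub ((hexp b).const_mul a)).div_const (b - a)).congr_deriv
    (by ring)

lemma exp_neg_mul_slope_neg {a b x : ℝ} (hx : 0 < x) (hab : a ≠ b) :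
    (exp (-(x * b)) - exp (-(x * a))) / (b - a) < 0 := by
  rcases hab.lt_or_gt with h | h
  · exact div_neg_of_neg_of_pos (sub_neg.2 (exp_lt_exp.2 (by nlinarith))) (sub_pos.2 h)
  · exact div_neg_of_pos_of_neg (sub_pos.2 (exp_lt_exp.2 (by nlinarith))) (sub_neg.2 h)

lemma strictAntiOn_expAffinity {a b : ℝ} (ha : 0 < a) (hb : 0 < b) (hab : a ≠ b) :
    StrictAntiOn (expAffinity a b) (Set.Ici 0) := by
  refine strictAntiOn_of_deriv_neg (convex_Ici 0)
    (fun x _ => (hasDerivAt_expAffinity a b x).continuousAt.continuousWithinAt) fun x hx => ?_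
  rw [interior_Ici] at hx
  rw [(hasDerivAt_expAffinity a b x).deriv, mul_div_assoc]
  exact mul_neg_of_pos_of_neg (mul_pos ha hb) (exp_neg_mul_slope_neg hx hab)

/-- The Hellinger affinity `g(ε) = [(1−τ)e^{−ετ/2} − τe^{−ε(1−τ)/2}]/(1−2τ)` between two
unit-scale asymmetric Laplace densities with skewness `τ ≠ 1/2` and locations `ε` apart
satisfies `g(0) = 1`, `g` is strictly decreasing on `[0,∞)`, and `g(ε) < 1` for `ε > 0`. -/
theorem hellinger_affinity_strictAnti (τ : ℝ) (hτ : τ ∈ Set.Ioo (0 : ℝ) 1)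
    (hτ2 : τ ≠ 1 / 2) :
    (((1 - τ) * Real.exp (-(0 * τ / 2)) - τ * Real.exp (-(0 * (1 - τ) / 2))) / (1 - 2 * τ)
        = 1) ∧
    StrictAntiOn
      (fun ε : ℝ =>
        ((1 - τ) * Real.exp (-(ε * τ / 2)) - τ * Real.exp (-(ε * (1 - τ) / 2))) / (1 - 2 * τ))
      (Set.Ici 0) ∧
    ∀ ε : ℝ, 0 < ε →
      ((1 - τ) * Real.exp (-(ε * τ / 2)) - τ * Real.exp (-(ε * (1 - τ) / 2))) / (1 - 2 * τ)
        < 1 := by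
  obtain ⟨hτ0, hτ1⟩ := hτ
  have hab : τ / 2 ≠ (1 - τ) / 2 := fun h => hτ2 (by linarith)
  have hg : (fun ε : ℝ =>
        ((1 - τ) * Real.exp (-(ε * τ / 2)) - τ * Real.exp (-(ε * (1 - τ) / 2))) / (1 - 2 * τ))
      = expAffinity (τ / 2) ((1 - τ) / 2) := by
    funext ε
    rw [expAffinity, show (1 - τ) / 2 - τ / 2 = (1 - 2 * τ) / 2 by ring]
    field_simp
  have hanti := strictAntiOn_expAffinity (by linarith) (by linarith) hab
  have h0 : expAffinity (τ / 2) ((1 - τ) / 2) 0 = 1 := expAffinity_zero hab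
  refine ⟨congrFun hg 0 ▸ h0, hg ▸ hanti, fun ε hε => ?_⟩
  rw [congrFun hg ε]
  exact (hanti Set.self_mem_Ici hε.le hε).trans_eq h0
end
end

section
/- Let τ ∈ (0,1), let Y be a real random variable whose law is absolutely continuous with P(Y ≤ μ₀) = τ for some μ₀ ∈ ℝ, and let μ̃ ∈ ℝ. Then E[ρ_τ(Y − μ̃)] − E[ρ_τ(Y − μ₀)] ≤ |μ̃ − μ₀| · P(0 < |Y − μ₀| < |μ̃ − μ₀|) ≤ |μ̃ − μ₀|. -/
open MeasureTheory ProbabilityTheory Real Filter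
open scoped ENNReal Topology NNReal

noncomputable section

/-!
Write `u = Y − μ₀` and `v = μ̃ − μ₀`. For `u ≠ 0` the check loss satisfies the pointwise bound
`ρ_τ(u − v) − ρ_τ(u) ≤ v (1{u ≤ 0} − τ) + |v| 1{0 < |u| < |v|}`: the first term is the linear
(subgradient) part of the increment, and the remainder is at most `|v|` and vanishes unless
`u − v` lies across the kink from `u`, which forces `|u| < |v|`. Absolute continuity gives `u ≠ 0` almost
surely, and `P(u ≤ 0) = τ` makes the subgradient term have mean zero; integrating leaves
`|v| P(0 < |u| < |v|)`.
-/

lemma measurable_checkFun (τ : ℝ) : Measurable (checkFun τ) :=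
  measurable_id.mul (measurable_const.sub
    (Measurable.ite measurableSet_Iio measurable_const measurable_const))

lemma abs_checkFun_sub_checkFun_le {τ : ℝ} (hτ0 : 0 ≤ τ) (hτ1 : τ ≤ 1) (a b : ℝ) :
    |checkFun τ a - checkFun τ b| ≤ |a - b| := by
  unfold checkFun
  rcases abs_cases (a - b) with ⟨he, _⟩ | ⟨he, _⟩ <;> rw [he, abs_le] <;> constructor <;>
    split_ifs <;> nlinarith

lemma checkFun_sub_sub_le (τ : ℝ) {u : ℝ} (hu : u ≠ 0) (v : ℝ) :
    checkFun τ (u - v) - checkFun τ u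
      ≤ v * ((if u ≤ 0 then 1 else 0) - τ) + |v| * (if 0 < |u| ∧ |u| < |v| then 1 else 0) := by
  unfold checkFun
  rcases hu.lt_or_gt with hu | hu
  · rw [abs_of_neg hu]
    split_ifs <;> simp_all <;> cases abs_cases v <;> nlinarith
  · rw [abs_of_pos hu]
    split_ifs <;> simp_all <;> cases abs_cases v <;> nlinarith

lemma integral_checkFun_sub_sub_le {Ω : Type*} [MeasurableSpace Ω] {P : Measure Ω}
    [IsProbabilityMeasure P] {τ : ℝ} (hτ0 : 0 ≤ τ) (hτ1 : τ ≤ 1) {U : Ω → ℝ} (hU : Measurable U)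
    (hatom : P {ω | U ω = 0} = 0) (hq : P {ω | U ω ≤ 0} = ENNReal.ofReal τ) (v : ℝ) :
    ∫ ω, (checkFun τ (U ω - v) - checkFun τ (U ω)) ∂P
      ≤ |v| * P.real {ω | 0 < |U ω| ∧ |U ω| < |v|} := by
  set A := {ω | U ω ≤ 0}
  set E := {ω | 0 < |U ω| ∧ |U ω| < |v|}
  have hA : MeasurableSet A := measurableSet_le hU measurable_const
  have hE : MeasurableSet E :=
    (measurableSet_lt measurable_const hU.abs).inter (measurableSet_lt hU.abs measurable_const)
  have hint : Integrable (fun ω => checkFun τ (U ω - v) - checkFun τ (U ω)) P := by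
    refine Integrable.of_bound (C := |v|) (((measurable_checkFun τ).comp (hU.sub_const v)).sub
      ((measurable_checkFun τ).comp hU)).aestronglyMeasurable (ae_of_all _ fun ω => ?_)
    simpa using abs_checkFun_sub_checkFun_le hτ0 hτ1 (U ω - v) (U ω)
  have hbound : ∀ᵐ ω ∂P, checkFun τ (U ω - v) - checkFun τ (U ω)
      ≤ v * (A.indicator 1 ω - τ) + |v| * E.indicator 1 ω := by
    have hne : ∀ᵐ ω ∂P, U ω ≠ 0 := measure_eq_zero_iff_ae_notMem.mp hatom
    filter_upwards [hne] with ω hω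
    simpa [A, E, Set.indicator_apply] using checkFun_sub_sub_le τ hω v
  have hA1 : Integrable (A.indicator (1 : Ω → ℝ)) P := (integrable_const 1).indicator hA
  have hE1 : Integrable (E.indicator (1 : Ω → ℝ)) P := (integrable_const 1).indicator hE
  have hintA : Integrable (fun ω => v * (A.indicator 1 ω - τ)) P :=
    (hA1.sub (integrable_const τ)).const_mul v
  have hintE : Integrable (fun ω => |v| * E.indicator 1 ω) P := hE1.const_mul |v|
  have hPA : P.real A = τ := by rw [measureReal_def, hq, ENNReal.toReal_ofReal hτ0]
  calc ∫ ω, (checkFun τ (U ω - v) - checkFun τ (U ω)) ∂P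
      ≤ ∫ ω, (v * (A.indicator 1 ω - τ) + |v| * E.indicator 1 ω) ∂P :=
        integral_mono_ae hint (hintA.add hintE) hbound
    _ = |v| * P.real E := by
        rw [integral_add hintA hintE, integral_const_mul, integral_const_mul,
          integral_sub hA1 (integrable_const τ),
          integral_indicator_one hA, integral_indicator_one hE, hPA]
        simp

/-- For a real random variable `Y` with absolutely continuous law and `P(Y ≤ μ₀) = τ`,
the excess expected check loss at `μ̃` over the loss at the true `τ`-quantile `μ₀` is at
most `|μ̃ − μ₀| · P(0 < |Y − μ₀| < |μ̃ − μ₀|) ≤ |μ̃ − μ₀|`. -/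
theorem check_loss_excess_bound {Ω : Type} [MeasurableSpace Ω] (P : Measure Ω)
    [IsProbabilityMeasure P] (τ : ℝ) (hτ : τ ∈ Set.Ioo (0 : ℝ) 1)
    (Y : Ω → ℝ) (hY : Measurable Y)
    (hac : Measure.map Y P ≪ (volume : Measure ℝ))
    (μ₀ : ℝ) (hq : P {ω | Y ω ≤ μ₀} = ENNReal.ofReal τ) (μt : ℝ) :
    (∫ ω, (checkFun τ (Y ω - μt) - checkFun τ (Y ω - μ₀)) ∂P)
        ≤ |μt - μ₀| * (P {ω | 0 < |Y ω - μ₀| ∧ |Y ω - μ₀| < |μt - μ₀|}).toReal ∧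
      |μt - μ₀| * (P {ω | 0 < |Y ω - μ₀| ∧ |Y ω - μ₀| < |μt - μ₀|}).toReal ≤ |μt - μ₀| := by
  have hatom : P {ω | Y ω - μ₀ = 0} = 0 := by
    simp_rw [sub_eq_zero]
    exact (Measure.map_apply hY (measurableSet_singleton μ₀)).symm.trans
      (hac Real.volume_singleton)
  have hq' : P {ω | Y ω - μ₀ ≤ 0} = ENNReal.ofReal τ := by simpa only [sub_nonpos] using hq
  have h := integral_checkFun_sub_sub_le hτ.1.le hτ.2.le (hY.sub_const μ₀) hatom hq' (μt - μ₀)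
  simp_rw [sub_sub_sub_cancel_right] at h
  exact ⟨h, mul_le_of_le_one_right (abs_nonneg _) measureReal_le_one⟩
end
end

section
/- Let τ ∈ (0,1), σ > 0, and ε ∈ ℝ, and set ξ = 1 − 2τ and ζ = τ(1−τ)/σ. Then exp( −(|ε| + (2τ−1)ε)/(2σ) ) = ∫₀^∞ (4πσv)^{−1/2} exp( −(ε − ξv)²/(4σv) − ζ v ) dv; i.e., the asymmetric Laplace kernel admits the normal–exponential (location–scale mixture of normals) representation. -/
/-!
Completing the square, `(ε - ξv)² / (4σv) + ζv = ε² / (4σv) - ξε / (2σ) + v / (4σ)` because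
`ξ² + 4τ(1 - τ) = 1`, so the integral is `exp(ξε / (2σ)) / √(4πσ)` times the Laplace-type integral
`∫₀^∞ v^{-1/2} exp(-pv - q/v) dv = √(π/p) exp(-2√(pq))`. Substituting `v = s²` turns the latter
into `∫₀^∞ exp(-(αs - β/s)²) ds = √π / (2α)` (Cauchy–Schlömilch): the map `f s = αs - β/s` is an
increasing bijection of `(0, ∞)` onto `ℝ`, so `∫ f' e^{-f²} = √π`, and the inversion `s ↦ β/(αs)`,
which sends `f` to `-f`, shows that the two summands of `f' = α + β/s²` contribute equally.
-/

open MeasureTheory ProbabilityTheory Real Filter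
open scoped ENNReal Topology NNReal

noncomputable section

open Set

section ChangeOfVariables

variable {E : Type*} [NormedAddCommGroup E] [NormedSpace ℝ E]

theorem integral_comp_sq_Ioi (g : ℝ → E) :
    ∫ x in Ioi 0, (2 * x) • g (x ^ 2) = ∫ y in Ioi 0, g y := by
  rw [← integral_comp_rpow_Ioi_of_pos (g := g) two_pos]
  refine setIntegral_congr_fun measurableSet_Ioi fun x _ ↦ ?_
  norm_num

theorem integral_comp_div_Ioi (g : ℝ → E) {c : ℝ} (hc : 0 < c) :
    ∫ x in Ioi 0, (c / x ^ 2) • g (c / x) = ∫ y in Ioi 0, g y := by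
  have himage : (c / ·) '' Ioi 0 = Ioi (0 : ℝ) := by
    ext y
    refine ⟨?_, fun hy ↦ ⟨c / y, div_pos hc hy, div_div_cancel₀ hc.ne'⟩⟩
    rintro ⟨x, hx, rfl⟩
    exact div_pos hc hx
  have hderiv : ∀ x ∈ Ioi (0 : ℝ), HasDerivWithinAt (c / ·) (-(c / x ^ 2)) (Ioi 0) x :=
    fun x hx ↦ by
      simpa [div_eq_mul_inv] using ((hasDerivAt_inv (ne_of_gt hx)).const_mul c).hasDerivWithinAt
  have hinj : InjOn (c / ·) (Ioi (0 : ℝ)) := fun x _ y _ h ↦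
    inv_injective (mul_left_cancel₀ hc.ne' h)
  have := integral_image_eq_integral_abs_deriv_smul measurableSet_Ioi hderiv hinj g
  rw [himage] at this
  rw [this]
  refine setIntegral_congr_fun measurableSet_Ioi fun x hx ↦ ?_
  rw [abs_neg, abs_of_pos (by have := mem_Ioi.1 hx; positivity)]

end ChangeOfVariables

theorem hasDerivAt_mul_sub_div (α β : ℝ) {s : ℝ} (hs : s ≠ 0) :
    HasDerivAt (fun s ↦ α * s - β / s) (α + β / s ^ 2) s := by
  have := ((hasDerivAt_id s).const_mul α).sub ((hasDerivAt_inv hs).const_mul β)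
  exact this.congr_deriv (by ring)

section MulSubDiv

variable {α β : ℝ}

theorem strictMonoOn_mul_sub_div (hα : 0 < α) (hβ : 0 ≤ β) :
    StrictMonoOn (fun s ↦ α * s - β / s) (Ioi 0) := fun x hx y _ hxy ↦ by
  have := div_le_div_of_nonneg_left hβ hx hxy.le
  have := mul_lt_mul_of_pos_left hxy hα
  dsimp only
  linarith

theorem image_mul_sub_div_Ioi (hα : 0 < α) (hβ : 0 < β) :
    (fun s ↦ α * s - β / s) '' Ioi 0 = univ := by
  refine eq_univ_of_forall fun y ↦ ?_
  obtain ⟨D, hD0, hD⟩ : ∃ D : ℝ, 0 ≤ D ∧ D ^ 2 = y ^ 2 + 4 * α * β :=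
    ⟨_, sqrt_nonneg _, sq_sqrt (by positivity)⟩
  have hyD : |y| < D := abs_lt_of_sq_lt_sq (by nlinarith [mul_pos hα hβ]) hD0
  have hyD' : 0 < y + D := by linarith [neg_abs_le y]
  -- the positive root of `α s² - y s - β = 0`
  refine ⟨(y + D) / (2 * α), div_pos hyD' (by positivity), ?_⟩
  field_simp
  linear_combination hD

theorem integrableOn_deriv_mul_sub_div_mul_exp_neg_sq (hα : 0 < α) (hβ : 0 < β) :
    IntegrableOn (fun s ↦ (α + β / s ^ 2) * exp (-(α * s - β / s) ^ 2)) (Ioi 0) := by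
  refine (integrableOn_congr_fun (fun s hs ↦ ?_) measurableSet_Ioi).1 <|
    (integrableOn_image_iff_integrableOn_abs_deriv_smul measurableSet_Ioi
      (fun s hs ↦ (hasDerivAt_mul_sub_div α β (mem_Ioi.1 hs).ne').hasDerivWithinAt)
      (strictMonoOn_mul_sub_div hα hβ.le).injOn (fun u ↦ exp (-u ^ 2))).1 ?_
  · have := mem_Ioi.1 hs
    simp only [smul_eq_mul, abs_of_pos (by positivity : 0 < α + β / s ^ 2)]
  · rw [image_mul_sub_div_Ioi hα hβ, integrableOn_univ]
    simpa using integrable_exp_neg_mul_sq one_pos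

theorem integral_deriv_mul_sub_div_mul_exp_neg_sq (hα : 0 < α) (hβ : 0 < β) :
    ∫ s in Ioi 0, (α + β / s ^ 2) * exp (-(α * s - β / s) ^ 2) = √π := by
  have := integral_image_eq_integral_abs_deriv_smul measurableSet_Ioi
    (fun s hs ↦ (hasDerivAt_mul_sub_div α β (mem_Ioi.1 hs).ne').hasDerivWithinAt)
    (strictMonoOn_mul_sub_div hα hβ.le).injOn (fun u ↦ exp (-u ^ 2))
  rw [image_mul_sub_div_Ioi hα hβ, Measure.restrict_univ] at this
  have hgauss : ∫ u, exp (-u ^ 2) = √π := by simpa using integral_gaussian 1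
  rw [← hgauss, this]
  refine setIntegral_congr_fun measurableSet_Ioi fun s hs ↦ ?_
  have := mem_Ioi.1 hs
  simp only [smul_eq_mul, abs_of_pos (by positivity : 0 < α + β / s ^ 2)]

theorem integral_exp_neg_sq_mul_sub_div_Ioi (hα : 0 < α) (hβ : 0 ≤ β) :
    ∫ s in Ioi 0, exp (-(α * s - β / s) ^ 2) = √π / (2 * α) := by
  rcases hβ.eq_or_lt with rfl | hβ
  · simp_rw [zero_div, sub_zero, mul_pow, ← neg_mul]
    rw [integral_gaussian_Ioi, sqrt_div pi_pos.le, sqrt_sq hα.le]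
    ring
  set f := fun s : ℝ ↦ α * s - β / s
  have hint := integrableOn_deriv_mul_sub_div_mul_exp_neg_sq hα hβ
  have hint₀ : IntegrableOn (fun s ↦ exp (-f s ^ 2)) (Ioi 0) := by
    refine (hint.const_mul α⁻¹).mono' (by fun_prop) ?_
    filter_upwards [ae_restrict_mem measurableSet_Ioi] with s hs
    have := mem_Ioi.1 hs
    rw [norm_of_nonneg (exp_pos _).le, ← mul_assoc, le_mul_iff_one_le_left (exp_pos _),
      le_inv_mul_iff₀ hα, mul_one, le_add_iff_nonneg_right]
    positivity
  have hinv : ∫ s in Ioi 0, β / s ^ 2 * exp (-f s ^ 2) = α * ∫ s in Ioi 0, exp (-f s ^ 2) := by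
    rw [← integral_comp_div_Ioi _ (div_pos hβ hα), ← integral_const_mul]
    refine setIntegral_congr_fun measurableSet_Ioi fun s hs ↦ ?_
    have := (mem_Ioi.1 hs).ne'
    have hf : f (β / α / s) = -f s := by
      simp only [f]
      field_simp
      ring
    rw [smul_eq_mul, hf, neg_sq]
    field_simp
  have hsplit : ∫ s in Ioi 0, β / s ^ 2 * exp (-f s ^ 2)
      = √π - α * ∫ s in Ioi 0, exp (-f s ^ 2) := by
    rw [← integral_deriv_mul_sub_div_mul_exp_neg_sq hα hβ, ← integral_const_mul,
      ← integral_sub hint (hint₀.const_mul α)]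
    congr 1 with s
    ring
  rw [hinv] at hsplit
  rw [eq_div_iff (by positivity)]
  linarith

end MulSubDiv

theorem integral_inv_sqrt_mul_exp_neg_mul_sub_div_Ioi {p q : ℝ} (hp : 0 < p) (hq : 0 ≤ q) :
    ∫ v in Ioi 0, (√v)⁻¹ * exp (-(p * v) - q / v) = √(π / p) * exp (-(2 * √(p * q))) := by
  have hsp : 0 < √p := sqrt_pos.2 hp
  rw [← integral_comp_sq_Ioi]
  have hsubst : EqOn (fun s ↦ (2 * s) • ((√(s ^ 2))⁻¹ * exp (-(p * s ^ 2) - q / s ^ 2)))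
      (fun s ↦ 2 * exp (-(2 * √(p * q))) * exp (-(√p * s - √q / s) ^ 2)) (Ioi 0) := by
    intro s hs
    have hs := mem_Ioi.1 hs
    have hexp : -(p * s ^ 2) - q / s ^ 2 = -(2 * √(p * q)) + -(√p * s - √q / s) ^ 2 := by
      rw [sqrt_mul hp.le]
      field_simp
      linear_combination s ^ 4 * sq_sqrt hp.le + sq_sqrt hq
    simp only [smul_eq_mul, sqrt_sq hs.le, hexp, exp_add]
    field_simp
  rw [setIntegral_congr_fun measurableSet_Ioi hsubst, integral_const_mul,
    integral_exp_neg_sq_mul_sub_div_Ioi hsp (sqrt_nonneg q), sqrt_div pi_pos.le]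
  field_simp

theorem ald_normal_exponential_mixture_general (τ σ ε : ℝ)
    (hσ : 0 < σ) :
    Real.exp (-((|ε| + (2 * τ - 1) * ε) / (2 * σ)))
      = ∫ v in Set.Ioi (0 : ℝ), (Real.sqrt (4 * Real.pi * σ * v))⁻¹ *
          Real.exp (-((ε - (1 - 2 * τ) * v) ^ 2 / (4 * σ * v)) - (τ * (1 - τ) / σ) * v) := by
  have h4πσ : 0 < 4 * π * σ := by positivity
  have hsplit : EqOn
      (fun v ↦ (√(4 * π * σ * v))⁻¹ *
        exp (-((ε - (1 - 2 * τ) * v) ^ 2 / (4 * σ * v)) - (τ * (1 - τ) / σ) * v))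
      (fun v ↦ (√(4 * π * σ))⁻¹ * exp ((1 - 2 * τ) * ε / (2 * σ)) *
        ((√v)⁻¹ * exp (-((4 * σ)⁻¹ * v) - ε ^ 2 / (4 * σ) / v))) (Ioi 0) := by
    intro v hv
    have := (mem_Ioi.1 hv).ne'
    have hexp : -((ε - (1 - 2 * τ) * v) ^ 2 / (4 * σ * v)) - (τ * (1 - τ) / σ) * v
        = (1 - 2 * τ) * ε / (2 * σ) + (-((4 * σ)⁻¹ * v) - ε ^ 2 / (4 * σ) / v) := by
      field_simp
      ring
    dsimp only
    rw [sqrt_mul h4πσ.le, mul_inv, hexp, exp_add]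
    ring
  have hπ : π / (4 * σ)⁻¹ = 4 * π * σ := by rw [div_inv_eq_mul]; ring
  have hpq : √((4 * σ)⁻¹ * (ε ^ 2 / (4 * σ))) = |ε| / (4 * σ) := by
    rw [show (4 * σ)⁻¹ * (ε ^ 2 / (4 * σ)) = (ε / (4 * σ)) ^ 2 by ring, sqrt_sq_eq_abs, abs_div,
      abs_of_pos (by positivity : 0 < 4 * σ)]
  rw [setIntegral_congr_fun measurableSet_Ioi hsplit, integral_const_mul,
    integral_inv_sqrt_mul_exp_neg_mul_sub_div_Ioi (by positivity) (by positivity), hπ, hpq,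
    mul_mul_mul_comm, inv_mul_cancel₀ (sqrt_pos.2 h4πσ).ne', one_mul, ← exp_add]
  congr 1
  field_simp
  ring

/-- Normal–exponential (location–scale mixture of normals) representation of the
asymmetric Laplace kernel: with `ξ = 1 − 2τ` and `ζ = τ(1−τ)/σ`,
`exp(−(|ε| + (2τ−1)ε)/(2σ)) = ∫₀^∞ (4πσv)^{−1/2} exp(−(ε − ξv)²/(4σv) − ζv) dv`. -/
theorem ald_normal_exponential_mixture (τ σ ε : ℝ) (hτ : τ ∈ Set.Ioo (0 : ℝ) 1)
    (hσ : 0 < σ) :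
    Real.exp (-((|ε| + (2 * τ - 1) * ε) / (2 * σ)))
      = ∫ v in Set.Ioi (0 : ℝ), (Real.sqrt (4 * Real.pi * σ * v))⁻¹ *
          Real.exp (-((ε - (1 - 2 * τ) * v) ^ 2 / (4 * σ * v)) - (τ * (1 - τ) / σ) * v) :=
  ald_normal_exponential_mixture_general τ σ ε hσ

end
end

section
/- Let d ∈ ℕ, σ₀² > 0, θ ∈ ℝ^d, and 0 < ς ≤ 1. Let π be the product of d independent N(0, σ₀²) distributions on ℝ^d. Then π( { u ∈ ℝ^d : |u_i − θ_i| ≤ ς for all i } ) ≥ ( ς √(2/(π σ₀²)) )^d · exp( −d ϑ/(2σ₀²) ), where ϑ = max_{1 ≤ i ≤ d} max( (θ_i − 1)², (θ_i + 1)² ). -/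
open MeasureTheory ProbabilityTheory Real
open scoped ENNReal NNReal

noncomputable section

/-! On the cube the density of `N(0, σ₀²)^{⊗d}` factorises, and in each coordinate the interval
`[θᵢ - ς, θᵢ + ς]` lies in `[θᵢ - 1, θᵢ + 1]`, where `u² ≤ ϑ`; so the one-dimensional density is at
least `exp(-ϑ/(2σ₀²)) / √(2πσ₀²)` there and each factor has mass at least that times `2ς`. -/

theorem sq_le_max_sq_of_mem_Icc {a b x : ℝ} (hx : x ∈ Set.Icc a b) :
    x ^ 2 ≤ max (a ^ 2) (b ^ 2) := by
  rcases le_total x 0 with hx0 | hx0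
  · exact le_max_of_le_left (by nlinarith [hx.1])
  · exact le_max_of_le_right (by nlinarith [hx.2])

theorem sqrt_two_div_eq (x : ℝ) : √(2 / x) = 2 * (√(2 * x))⁻¹ := by
  rw [show 2 / x = 2 ^ 2 / (2 * x) by ring, Real.sqrt_div (by positivity),
    Real.sqrt_sq zero_le_two, div_eq_mul_inv]

theorem ofReal_mul_volume_le_gaussianReal (μ : ℝ) {v : ℝ≥0} (hv : v ≠ 0) {s : Set ℝ} {M : ℝ}
    (hM : ∀ x ∈ s, (x - μ) ^ 2 ≤ M) :
    ENNReal.ofReal ((√(2 * π * v))⁻¹ * exp (-M / (2 * v))) * volume s ≤ gaussianReal μ v s := by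
  rw [gaussianReal_apply μ hv, ← setLIntegral_const]
  refine setLIntegral_mono (measurable_gaussianPDF μ v) fun x hx => ?_
  refine ENNReal.ofReal_le_ofReal (mul_le_mul_of_nonneg_left ?_ (by positivity))
  gcongr
  exact hM x hx

theorem pow_card_le_pi_pi {ι : Type*} [Fintype ι] {α : ι → Type*} [∀ i, MeasurableSpace (α i)]
    (μ : ∀ i, Measure (α i)) [∀ i, SigmaFinite (μ i)] (s : ∀ i, Set (α i)) {c : ℝ≥0∞}
    (hc : ∀ i, c ≤ μ i (s i)) : c ^ Fintype.card ι ≤ Measure.pi μ (Set.univ.pi s) := by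
  rw [Measure.pi_pi, ← Finset.card_univ, ← Finset.prod_const]
  exact Finset.prod_le_prod' fun i _ => hc i

/-- Lower bound for the product of `d` independent `N(0, σ₀²)` distributions of the
sup-norm cube of radius `ς ≤ 1` around `θ`:
`π({u : |uᵢ − θᵢ| ≤ ς ∀i}) ≥ (ς √(2/(π σ₀²)))^d exp(−dϑ/(2σ₀²))`,
where `ϑ = maxᵢ max((θᵢ−1)², (θᵢ+1)²)`. -/
theorem gaussian_product_cube_lower_bound (d : ℕ) (v : ℝ≥0) (hv : 0 < v)
    (θ : Fin d → ℝ) (ς : ℝ) (hς0 : 0 < ς) (hς1 : ς ≤ 1) :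
    ENNReal.ofReal ((ς * Real.sqrt (2 / (Real.pi * (v : ℝ)))) ^ d *
        Real.exp (-((d : ℝ) * ⨆ i, max ((θ i - 1) ^ 2) ((θ i + 1) ^ 2)) / (2 * (v : ℝ))))
      ≤ (Measure.pi fun _ : Fin d => gaussianReal 0 v) {u | ∀ i, |u i - θ i| ≤ ς} := by
  set ϑ := ⨆ i, max ((θ i - 1) ^ 2) ((θ i + 1) ^ 2)
  set c := (√(2 * π * v))⁻¹ * exp (-ϑ / (2 * v))
  have hϑ (i : Fin d) : max ((θ i - 1) ^ 2) ((θ i + 1) ^ 2) ≤ ϑ :=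
    le_ciSup (f := fun i => max ((θ i - 1) ^ 2) ((θ i + 1) ^ 2)) (Set.finite_range _).bddAbove i
  have hcube : {u : Fin d → ℝ | ∀ i, |u i - θ i| ≤ ς}
      = Set.univ.pi fun i => Metric.closedBall (θ i) ς := by
    ext u
    simp [Real.dist_eq]
  have hball (i : Fin d) :
      ENNReal.ofReal c * ENNReal.ofReal (2 * ς) ≤ gaussianReal 0 v (Metric.closedBall (θ i) ς) := by
    rw [← Real.volume_closedBall]
    refine ofReal_mul_volume_le_gaussianReal 0 hv.ne' fun x hx => ?_
    rw [sub_zero]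
    refine (sq_le_max_sq_of_mem_Icc ?_).trans (hϑ i)
    rw [Real.closedBall_eq_Icc] at hx
    exact Set.Icc_subset_Icc (by linarith) (by linarith) hx
  have hLHS : (ς * √(2 / (π * v))) ^ d * exp (-(d * ϑ) / (2 * v)) = (c * (2 * ς)) ^ d := by
    rw [sqrt_two_div_eq, ← mul_assoc 2, show -(d * ϑ) / (2 * v) = d * (-ϑ / (2 * v)) by ring, Real.exp_nat_mul]
    ring
  rw [hLHS, ENNReal.ofReal_pow (by positivity), ENNReal.ofReal_mul (by positivity), hcube]
  simpa only [Fintype.card_fin] using pow_card_le_pi_pi _ _ hball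

end
end

section
/- Let p ∈ ℕ, σ₀² > 0, and 0 < a < b < 1. For each n let d_n ≤ (p+3) n^a, C_n = exp(n^{b−a}), and let π_n be the product of d_n independent N(0, σ₀²) distributions on ℝ^{d_n}. Then there exist a constant r > 0 and N such that for all n ≥ N, π_n( { θ ∈ ℝ^{d_n} : |θ_i| > C_n for some i } ) < exp(−n r). -/
open MeasureTheory ProbabilityTheory Real
open scoped ENNReal NNReal

noncomputable section

open Filter in
private lemma gauss_neg_map' (v : ℝ≥0) :
    (gaussianReal 0 v).map (fun x => -x) = gaussianReal 0 v := by
  have h := gaussianReal_map_const_mul (μ := 0) (v := v) (-1)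
  simp only [neg_one_mul, mul_zero] at h
  convert h using 2
  exact NNReal.coe_injective (by push_cast; norm_num)

private lemma gaussian_tail' (v : ℝ≥0) (hv : 0 < v) (C : ℝ) (hC0 : 0 ≤ C) (hC : 2 * v ≤ C) :
    gaussianReal 0 v {x : ℝ | C < |x|} ≤
      ENNReal.ofReal (2 * (Real.sqrt (2 * π * v))⁻¹ * Real.exp (-C)) := by
  set K : ℝ := (Real.sqrt (2 * π * v))⁻¹ with hK
  have hKpos : 0 < K := by
    have : 0 < Real.sqrt (2 * π * v) := Real.sqrt_pos.mpr (by positivity)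
    positivity
  have hset : {x : ℝ | C < |x|} = {x : ℝ | C < x} ∪ {x : ℝ | C < -x} := by
    ext x; simp [lt_abs]
  have hmeas : MeasurableSet {x : ℝ | C < x} :=
    (isOpen_lt continuous_const continuous_id).measurableSet
  have hone : gaussianReal 0 v {x : ℝ | C < x} ≤ ENNReal.ofReal (K * Real.exp (-C)) := by
    rw [gaussianReal_apply 0 hv.ne' _]
    have hIoi : {x : ℝ | C < x} = Set.Ioi C := rfl
    rw [hIoi]
    have hbd : ∀ x ∈ Set.Ioi C, gaussianPDF 0 v x ≤ ENNReal.ofReal (K * Real.exp (-x)) := by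
      intro x hx
      have hxC : C < x := hx
      have hx0 : 0 < x := lt_of_le_of_lt (le_trans (by positivity) hC) hxC
      have h2v : (0:ℝ) < 2 * v := by
        have : (0:ℝ) < v := hv
        linarith
      have hexp : Real.exp (-(x - 0) ^ 2 / (2 * v)) ≤ Real.exp (-x) := by
        rw [Real.exp_le_exp]
        rw [div_le_iff₀ h2v]
        nlinarith [hC, hxC.le, hx0.le]
      unfold gaussianPDF gaussianPDFReal
      apply ENNReal.ofReal_le_ofReal
      have := mul_le_mul_of_nonneg_left hexp hKpos.le
      simpa [hK] using this
    calc ∫⁻ x in Set.Ioi C, gaussianPDF 0 v x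
        ≤ ∫⁻ x in Set.Ioi C, ENNReal.ofReal (K * Real.exp (-x)) :=
          setLIntegral_mono (by fun_prop) hbd
      _ = ENNReal.ofReal (∫ x in Set.Ioi C, K * Real.exp (-x)) := by
          rw [← ofReal_integral_eq_lintegral_ofReal]
          · have hint : IntegrableOn (fun x : ℝ => Real.exp (-x)) (Set.Ioi C) := by
              have := exp_neg_integrableOn_Ioi C (one_pos)
              simpa [neg_one_mul] using this
            exact hint.const_mul K
          · filter_upwards with x
            positivity
      _ = ENNReal.ofReal (K * Real.exp (-C)) := by
          rw [MeasureTheory.integral_const_mul, integral_exp_neg_Ioi]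
  have hneg : gaussianReal 0 v {x : ℝ | C < -x} = gaussianReal 0 v {x : ℝ | C < x} := by
    conv_rhs => rw [← gauss_neg_map' v]
    rw [Measure.map_apply measurable_neg hmeas]
    rfl
  calc gaussianReal 0 v {x : ℝ | C < |x|}
      ≤ gaussianReal 0 v {x : ℝ | C < x} + gaussianReal 0 v {x : ℝ | C < -x} := by
        rw [hset]; exact measure_union_le _ _
    _ ≤ ENNReal.ofReal (K * Real.exp (-C)) + ENNReal.ofReal (K * Real.exp (-C)) := by
        rw [hneg]; exact add_le_add hone hone
    _ = ENNReal.ofReal (2 * K * Real.exp (-C)) := by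
        rw [← ENNReal.ofReal_add (by positivity) (by positivity)]
        ring_nf

private lemma pi_eval_apply' {m : ℕ} (ν : Measure ℝ) [IsProbabilityMeasure ν]
    (i : Fin m) (T : Set ℝ) :
    (Measure.pi fun _ : Fin m => ν) ((fun θ : Fin m → ℝ => θ i) ⁻¹' T) = ν T := by
  rw [show (fun θ : Fin m → ℝ => θ i) = Function.eval i from rfl, Set.eval_preimage,
    Measure.pi_pi]
  rw [Finset.prod_eq_single i (fun j _ hj => by
    rw [Function.update_of_ne hj]; exact measure_univ) (fun h => absurd (Finset.mem_univ i) h)]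
  rw [Function.update_self]

/-- The independent `N(0, σ₀²)` product priors give exponentially small mass to the
complement of the sieve `𝔉_n = {θ ∈ ℝ^{d_n} : |θ_i| ≤ C_n ∀ i}` with
`C_n = exp(n^{b−a})` and `d_n ≤ (p+3) n^a`, `0 < a < b < 1`: there are `r > 0` and `N`
with `π_n(𝔉_n^c) < exp(−nr)` for all `n ≥ N`. -/
theorem gaussian_prior_sieve_complement_bound (p : ℕ) (v : ℝ≥0) (hv : 0 < v)
    (a b : ℝ) (ha : 0 < a) (hab : a < b) (hb : b < 1)
    (d : ℕ → ℕ) (hd : ∀ n : ℕ, (d n : ℝ) ≤ ((p : ℝ) + 3) * (n : ℝ) ^ a) :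
    ∃ r > (0 : ℝ), ∃ N : ℕ, ∀ n ≥ N,
      (Measure.pi fun _ : Fin (d n) => gaussianReal 0 v)
          {θ | ∃ i, Real.exp ((n : ℝ) ^ (b - a)) < |θ i|}
        < ENNReal.ofReal (Real.exp (-(n * r))) := by
  classical
  set K : ℝ := (Real.sqrt (2 * π * v))⁻¹ with hK
  have hKpos : 0 < K := by
    have : 0 < Real.sqrt (2 * π * v) := Real.sqrt_pos.mpr (by positivity)
    positivity
  set D : ℝ := ((p : ℝ) + 3) * (2 * K) with hD
  have hDpos : 0 < D := by positivity
  have hba : (0:ℝ) < b - a := by linarith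
  have h3 : Filter.Tendsto (fun n : ℕ => (n : ℝ) ^ (b - a)) Filter.atTop Filter.atTop :=
    (tendsto_rpow_atTop hba).comp tendsto_natCast_atTop_atTop
  -- (E1) eventually 2n ≤ exp(n^(b-a))
  have E1 : ∀ᶠ n : ℕ in Filter.atTop, 2 * (n : ℝ) ≤ Real.exp ((n : ℝ) ^ (b - a)) := by
    have h2 : ∀ᶠ x : ℝ in Filter.atTop, 2 * x ^ (1 / (b - a)) ≤ Real.exp x := by
      filter_upwards [(tendsto_exp_div_rpow_atTop (1 / (b - a))).eventually_ge_atTop 2,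
        Filter.eventually_gt_atTop 0] with x hx hx0
      rw [le_div_iff₀ (Real.rpow_pos_of_pos hx0 _)] at hx
      linarith
    filter_upwards [h3.eventually h2] with n hn
    rwa [← Real.rpow_mul (Nat.cast_nonneg n), mul_one_div,
      div_self hba.ne', Real.rpow_one] at hn
  -- (E2) eventually D n < exp n
  have E2 : ∀ᶠ n : ℕ in Filter.atTop, D * (n : ℝ) < Real.exp (n : ℝ) := by
    have h4 : Filter.Tendsto (fun x : ℝ => Real.exp x / x) Filter.atTop Filter.atTop := by
      simpa using tendsto_exp_div_pow_atTop 1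
    have := (h4.comp tendsto_natCast_atTop_atTop).eventually_gt_atTop D
    filter_upwards [this, Filter.eventually_ge_atTop 1] with n hn hn1
    have hn0 : (0:ℝ) < n := by exact_mod_cast hn1
    simp only [Function.comp_apply] at hn
    rw [lt_div_iff₀ hn0] at hn
    linarith
  -- (E3) eventually 2v ≤ exp(n^(b-a))
  have E3 : ∀ᶠ n : ℕ in Filter.atTop, 2 * (v : ℝ) ≤ Real.exp ((n : ℝ) ^ (b - a)) :=
    (Real.tendsto_exp_atTop.comp h3).eventually_ge_atTop _
  obtain ⟨N, hN⟩ := Filter.eventually_atTop.mp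
    (E1.and (E2.and (E3.and (Filter.eventually_ge_atTop 1))))
  refine ⟨1, one_pos, N, fun n hn => ?_⟩
  obtain ⟨h1, h2, h3v, hn1⟩ := hN n hn
  set C : ℝ := Real.exp ((n : ℝ) ^ (b - a)) with hC
  have hC0 : (0:ℝ) ≤ C := (Real.exp_pos _).le
  have hn1' : (1:ℝ) ≤ (n:ℝ) := by exact_mod_cast hn1
  have tail := gaussian_tail' v hv C hC0 h3v
  have hset : {θ : Fin (d n) → ℝ | ∃ i, C < |θ i|}
      = ⋃ i : Fin (d n), (fun θ : Fin (d n) → ℝ => θ i) ⁻¹' {x : ℝ | C < |x|} := by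
    ext θ; simp
  calc (Measure.pi fun _ : Fin (d n) => gaussianReal 0 v) {θ | ∃ i, C < |θ i|}
      ≤ ∑' i : Fin (d n), (Measure.pi fun _ : Fin (d n) => gaussianReal 0 v)
          ((fun θ : Fin (d n) → ℝ => θ i) ⁻¹' {x : ℝ | C < |x|}) := by
        rw [hset]; exact measure_iUnion_le _
    _ = ∑' _ : Fin (d n), gaussianReal 0 v {x : ℝ | C < |x|} :=
        tsum_congr fun i => pi_eval_apply' _ i _
    _ = (d n : ℝ≥0∞) * gaussianReal 0 v {x : ℝ | C < |x|} := by
        rw [tsum_fintype]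
        simp [Finset.sum_const, nsmul_eq_mul]
    _ ≤ (d n : ℝ≥0∞) * ENNReal.ofReal (2 * K * Real.exp (-C)) := by
        exact mul_le_mul_right tail _
    _ = ENNReal.ofReal ((d n : ℝ) * (2 * K * Real.exp (-C))) := by
        rw [← ENNReal.ofReal_natCast (d n), ← ENNReal.ofReal_mul (by positivity)]
    _ < ENNReal.ofReal (Real.exp (-((n : ℝ) * 1))) := by
        rw [ENNReal.ofReal_lt_ofReal_iff (Real.exp_pos _)]
        have hd' : (d n : ℝ) ≤ ((p : ℝ) + 3) * (n : ℝ) := by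
          refine le_trans (hd n) ?_
          have : (n : ℝ) ^ a ≤ (n : ℝ) ^ (1:ℝ) :=
            Real.rpow_le_rpow_of_exponent_le hn1' (by linarith)
          rw [Real.rpow_one] at this
          nlinarith
        have e1 : (d n : ℝ) * (2 * K * Real.exp (-C)) ≤ D * n * Real.exp (-C) := by
          have h5 : (d n : ℝ) * (2 * K) ≤ D * n := by
            have := mul_le_mul_of_nonneg_right hd' (by positivity : (0:ℝ) ≤ 2 * K)
            calc (d n : ℝ) * (2 * K) ≤ ((p : ℝ) + 3) * (n : ℝ) * (2 * K) := this
              _ = D * n := by rw [hD]; ring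
          calc (d n : ℝ) * (2 * K * Real.exp (-C)) = (d n : ℝ) * (2 * K) * Real.exp (-C) := by
                ring
            _ ≤ D * n * Real.exp (-C) := mul_le_mul_of_nonneg_right h5 (Real.exp_pos _).le
        have e2 : D * n * Real.exp (-C) ≤ D * n * Real.exp (-(2 * n)) := by
          refine mul_le_mul_of_nonneg_left ?_ (by positivity)
          exact Real.exp_le_exp.mpr (by linarith)
        have e3 : D * n * Real.exp (-(2 * n)) < Real.exp n * Real.exp (-(2 * n)) :=
          mul_lt_mul_of_pos_right h2 (Real.exp_pos _)
        have e4 : Real.exp (n:ℝ) * Real.exp (-(2 * n)) = Real.exp (-((n:ℝ) * 1)) := by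
          rw [← Real.exp_add]; ring_nf
        linarith
  done

end
end
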